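/- If at DMPC iteration j-1 there exists a complete feasible trajectory from x_S to x_F, then by induction on time steps, at iteration j the DMPC optimization is feasible at every time step t ≥ 0: at each step, the shifted trajectory obtained by appending one step of the iteration-(j-1) trajectory to the tail of the time-(t-1) solution is a feasible candidate. -/

import Mathlib

/-!
A feasible state `x` comes with an admissible `N`-step trajectory ending at some `xp τ`;
continuing it along the previous trajectory gives an admissible infinite trajectory from `x`
whose states `N` steps ahead all lie on the previous trajectory. Every state of such a
trajectory is feasible, in particular its second state `f x u`: this is the shifted candidate
(the tail of the current solution followed by one step of the previous trajectory). The
previous trajectory itself is such a trajectory, which gives feasibility of `xS`.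
-/

/-- A state `x` is DMPC-feasible (w.r.t. the previous-iteration trajectory `xp, up`): there
is an admissible `N`-step trajectory from `x` landing on a state `xp τ` of the previous
trajectory, after which the previous trajectory may be followed. -/
def DMPCFeasible {X U : Type*} (f : X → U → X) (Xset : Set X) (Uset : Set U)
    (xp : ℕ → X) (N : ℕ) (x : X) : Prop :=
  ∃ (y : ℕ → X) (v : ℕ → U) (τ : ℕ),
    y 0 = x ∧
    (∀ k, k < N → y (k + 1) = f (y k) (v k)) ∧
    (∀ k, k ≤ N → y k ∈ Xset) ∧
    (∀ k, k < N → v k ∈ Uset) ∧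
    y N = xp τ

section

variable {X U : Type*} {f : X → U → X} {Xset : Set X} {Uset : Set U}

structure IsAdmissibleTrajectory (f : X → U → X) (Xset : Set X) (Uset : Set U)
    (w : ℕ → X) (u : ℕ → U) : Prop where
  step : ∀ k, w (k + 1) = f (w k) (u k)
  mem_state : ∀ k, w k ∈ Xset
  mem_input : ∀ k, u k ∈ Uset

theorem IsAdmissibleTrajectory.dmpcFeasible {w : ℕ → X} {u : ℕ → U}
    (hw : IsAdmissibleTrajectory f Xset Uset w u) {xp : ℕ → X} {N : ℕ} (t τ : ℕ)
    (hτ : w (t + N) = xp τ) : DMPCFeasible f Xset Uset xp N (w t) :=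
  ⟨fun k => w (t + k), fun k => u (t + k), τ, rfl, fun k _ => hw.step (t + k),
    fun k _ => hw.mem_state (t + k), fun k _ => hw.mem_input (t + k), hτ⟩

theorem DMPCFeasible.exists_admissible_extension {xp : ℕ → X} {up : ℕ → U} {N : ℕ} {x : X}
    (hx : DMPCFeasible f Xset Uset xp N x) (hp : IsAdmissibleTrajectory f Xset Uset xp up) :
    ∃ (w : ℕ → X) (u : ℕ → U) (τ : ℕ), IsAdmissibleTrajectory f Xset Uset w u ∧
      w 0 = x ∧ ∀ s, w (N + s) = xp (τ + s) := by
  obtain ⟨y, v, τ, hy0, hydyn, hyX, hyU, hyN⟩ := hx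
  set w : ℕ → X := fun k => if k ≤ N then y k else xp (τ + (k - N)) with hw
  set u : ℕ → U := fun k => if k < N then v k else up (τ + (k - N)) with hu
  have hw_tail (k : ℕ) (hk : N ≤ k) : w k = xp (τ + (k - N)) := by
    rcases hk.eq_or_lt with rfl | hlt
    · simp [hw, hyN]
    · simp [hw, Nat.not_le.mpr hlt]
  refine ⟨w, u, τ, ⟨fun k => ?_, fun k => ?_, fun k => ?_⟩, by simp [hw, hy0], fun s => ?_⟩
  · rcases Nat.lt_or_ge k N with hk | hk
    · simp only [hw, hu, if_pos hk, if_pos hk.le, if_pos (Nat.succ_le_of_lt hk)]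
      exact hydyn k hk
    · rw [hw_tail (k + 1) (by omega), hw_tail k hk, show τ + (k + 1 - N) = τ + (k - N) + 1 by omega,
        hp.step]
      simp only [hu, if_neg (Nat.not_lt.mpr hk)]
  · by_cases hk : k ≤ N
    · simpa only [hw, if_pos hk] using hyX k hk
    · simpa only [hw, if_neg hk] using hp.mem_state _
  · by_cases hk : k < N
    · simpa only [hu, if_pos hk] using hyU k hk
    · simpa only [hu, if_neg hk] using hp.mem_input _
  · rw [hw_tail (N + s) (Nat.le_add_right N s), Nat.add_sub_cancel_left]

end

theorem dmpc_recursive_feasibility_general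
    {X U : Type*} (f : X → U → X) (Xset : Set X) (Uset : Set U)
    (xp : ℕ → X) (up : ℕ → U) (xS : X)
    (hp0 : xp 0 = xS)
    (hpdyn : ∀ k, xp (k + 1) = f (xp k) (up k))
    (hpX : ∀ k, xp k ∈ Xset) (hpU : ∀ k, up k ∈ Uset)
    (N : ℕ) :
    DMPCFeasible f Xset Uset xp N xS ∧
    (∀ x : X, DMPCFeasible f Xset Uset xp N x →
      ∃ u ∈ Uset, f x u ∈ Xset ∧ DMPCFeasible f Xset Uset xp N (f x u)) := by
  have hp : IsAdmissibleTrajectory f Xset Uset xp up := ⟨hpdyn, hpX, hpU⟩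
  refine ⟨hp0 ▸ hp.dmpcFeasible 0 N (by rw [zero_add]), fun x hx => ?_⟩
  obtain ⟨w, u, τ, hw, rfl, hw_tail⟩ := hx.exists_admissible_extension hp
  refine ⟨u 0, hw.mem_input 0, hw.step 0 ▸ hw.mem_state 1, ?_⟩
  rw [← hw.step 0]
  exact hw.dmpcFeasible 1 (τ + 1) (by rw [add_comm, hw_tail])

/-- Recursive feasibility of DMPC: given a complete feasible trajectory `(xp, up)` from
`xS` to the equilibrium `xF` at iteration `j - 1`, the initial state `xS` is feasible at
iteration `j`, and feasibility propagates from each time step to the next (via the shifted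
trajectory appending one more step of the iteration-(j-1) trajectory); hence by induction
the DMPC problem is feasible at every time step. -/
theorem dmpc_recursive_feasibility
    {X U : Type*} (f : X → U → X) (Xset : Set X) (Uset : Set U)
    (xF : X) (z0 : U) (hz0 : z0 ∈ Uset) (heq : f xF z0 = xF) (hxF : xF ∈ Xset)
    (xp : ℕ → X) (up : ℕ → U) (xS : X)
    (hp0 : xp 0 = xS)
    (hpdyn : ∀ k, xp (k + 1) = f (xp k) (up k))
    (hpX : ∀ k, xp k ∈ Xset) (hpU : ∀ k, up k ∈ Uset)
    (hpF : ∃ T, ∀ k ≥ T, xp k = xF)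
    (N : ℕ) (hN : 1 ≤ N) :
    DMPCFeasible f Xset Uset xp N xS ∧
    (∀ x : X, DMPCFeasible f Xset Uset xp N x →
      ∃ u ∈ Uset, f x u ∈ Xset ∧ DMPCFeasible f Xset Uset xp N (f x u)) :=
  dmpc_recursive_feasibility_general f Xset Uset xp up xS hp0 hpdyn hpX hpU N
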